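/- Let 0<α<1, β>0 with α+1/β≥1, and let W be a Young function. Then there exist constants c₁,c₂>0 such that for every a∈(0,2^{−1/β}): c₁ · a · ‖t^{α−1} χ_{(a^β,1)}(t)‖_{L^W(0,1)} ≤ ‖ t^{α−1} ∫_0^{t^{1/β}} χ_{(0,a)}(s) ds ‖_{L^W(0,1)} ≤ c₂ · a · ‖t^{α−1} χ_{(a^β,1)}(t)‖_{L^W(0,1)}, where the middle quantity is the Luxemburg norm of the function t ↦ t^{α−1}·min{t^{1/β}, a}. -/

import Mathlib

open MeasureTheory Filter Set Real Topology
open scoped ENNReal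

noncomputable section

/-- `A` is a Young function with density `a`. -/
def IsYoungWith (A a : ℝ → ℝ) : Prop :=
  a 0 = 0 ∧ (∀ s, 0 < s → 0 < a s) ∧
  MonotoneOn a (Set.Ici 0) ∧
  (∀ s, 0 ≤ s → ContinuousWithinAt a (Set.Ici s) s) ∧
  Filter.Tendsto a Filter.atTop Filter.atTop ∧
  (∀ t, 0 ≤ t → A t = ∫ s in (0:ℝ)..t, a s)

/-- `A` is a Young function. -/
def IsYoung (A : ℝ → ℝ) : Prop := ∃ a, IsYoungWith A a

/-- The Luxemburg norm of `f` in the Orlicz space `L^A(S)`. -/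
def luxNorm (A : ℝ → ℝ) (S : Set ℝ) (f : ℝ → ℝ) : ℝ :=
  sInf {lam : ℝ | 0 < lam ∧ (∫⁻ t in S, ENNReal.ofReal (A (|f t| / lam))) ≤ 1}

/-! Write `c = a ^ β < 1/2`, `F t = t ^ (α - 1) * min (t ^ (1/β)) a` for the middle function
and `G` for the truncated power `χ_(c,1) t ^ (α - 1)`. On `(c, 1)` we have `F = a G`, and `F ≥ 0`
elsewhere, so `a G ≤ F` and the lower bound holds with `c₁ = 1`. On `(0, c]`,
`F t = t ^ (α - 1 + 1/β)` is nondecreasing because `α + 1/β ≥ 1`, hence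
`F t ≤ F c = a c ^ (α - 1) ≤ 2 ^ (1 - α) a G (t + c)`. Thus the modular of `F` over `(0, 1)` is at
most twice that of `2 ^ (1 - α) a G` over `(c, 1)`, and the convexity inequality
`2 W (x / 2) ≤ W x` of the Young function absorbs the factor `2`, giving `c₂ = 2 ^ (2 - α)`. -/

namespace IsYoungWith

variable {A a : ℝ → ℝ}

lemma density_nonneg (h : IsYoungWith A a) {s : ℝ} (hs : 0 ≤ s) : 0 ≤ a s := by
  rcases hs.eq_or_lt with rfl | hs
  · exact h.1.ge
  · exact (h.2.1 s hs).le

lemma intervalIntegrable (h : IsYoungWith A a) {x y : ℝ} (hx : 0 ≤ x) (hxy : x ≤ y) :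
    IntervalIntegrable a volume x y := by
  refine (h.2.2.1.mono fun z hz => ?_).intervalIntegrable
  rw [uIcc_of_le hxy] at hz
  exact hx.trans hz.1

lemma integral_eq_sub (h : IsYoungWith A a) {x y : ℝ} (hx : 0 ≤ x) (hxy : x ≤ y) :
    ∫ s in x..y, a s = A y - A x := by
  rw [h.2.2.2.2.2 x hx, h.2.2.2.2.2 y (hx.trans hxy),
    intervalIntegral.integral_interval_sub_left (h.intervalIntegrable le_rfl (hx.trans hxy))
      (h.intervalIntegrable le_rfl hx)]

lemma apply_zero (h : IsYoungWith A a) : A 0 = 0 := by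
  simpa using h.2.2.2.2.2 0 le_rfl

lemma monotoneOn (h : IsYoungWith A a) : MonotoneOn A (Ici 0) := by
  intro x hx y _ hxy
  have := intervalIntegral.integral_nonneg (μ := volume) hxy
    fun s hs => h.density_nonneg (le_trans hx hs.1)
  linarith [h.integral_eq_sub hx hxy]

/-- Since `a` is nondecreasing, `A` grows at least as much on `[x/2, x]` as on `[0, x/2]`. -/
lemma two_mul_apply_half_le (h : IsYoungWith A a) {x : ℝ} (hx : 0 ≤ x) :
    2 * A (x / 2) ≤ A x := by
  have hx2 : 0 ≤ x / 2 := by positivity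
  have hint : IntervalIntegrable (fun s => a (s + x / 2)) volume 0 (x / 2) := by
    have := (h.intervalIntegrable hx2 (half_le_self hx)).comp_add_right (x / 2)
    rwa [sub_self, sub_half] at this
  have hshift : ∫ s in (0:ℝ)..x / 2, a s ≤ ∫ s in (0:ℝ)..x / 2, a (s + x / 2) :=
    intervalIntegral.integral_mono_on hx2 (h.intervalIntegrable le_rfl hx2) hint
      fun s hs => h.2.2.1 hs.1 (by simp only [mem_Ici]; linarith [hs.1]) (by linarith)
  rw [intervalIntegral.integral_comp_add_right, zero_add, add_halves,
    h.integral_eq_sub hx2 (by linarith), h.integral_eq_sub le_rfl hx2, h.apply_zero] at hshift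
  linarith

end IsYoungWith

def luxAdmissible (A : ℝ → ℝ) (S : Set ℝ) (f : ℝ → ℝ) : Set ℝ :=
  {lam : ℝ | 0 < lam ∧ (∫⁻ t in S, ENNReal.ofReal (A (|f t| / lam))) ≤ 1}

section Luxemburg

variable {A : ℝ → ℝ} {S : Set ℝ} {f g : ℝ → ℝ}

lemma luxNorm_eq_sInf : luxNorm A S f = sInf (luxAdmissible A S f) := rfl

lemma luxNorm_congr (hS : MeasurableSet S) (hfg : EqOn f g S) :
    luxNorm A S f = luxNorm A S g := by
  have hint : ∀ lam, ∫⁻ t in S, ENNReal.ofReal (A (|f t| / lam))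
      = ∫⁻ t in S, ENNReal.ofReal (A (|g t| / lam)) := fun lam =>
    setLIntegral_congr_fun hS fun t ht => by rw [hfg ht]
  simp only [luxNorm, hint]

/-- Since `sInf ∅ = 0`, a function with no admissible `λ` has norm `0`, whatever its size. -/
lemma luxNorm_le_mul {C : ℝ} (hC : 0 ≤ C)
    (hmap : ∀ μ ∈ luxAdmissible A S g, C * μ ∈ luxAdmissible A S f)
    (hne : (luxAdmissible A S f).Nonempty → (luxAdmissible A S g).Nonempty) :
    luxNorm A S f ≤ C * luxNorm A S g := by
  rw [luxNorm_eq_sInf, luxNorm_eq_sInf]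
  rcases (luxAdmissible A S g).eq_empty_or_nonempty with hg | hg
  · have hf : luxAdmissible A S f = ∅ :=
      not_nonempty_iff_eq_empty.1 fun hf => (hne hf).ne_empty hg
    simp [hf, hg]
  · rw [← smul_eq_mul, ← Real.sInf_smul_of_nonneg hC]
    exact csInf_le_csInf ⟨0, fun _ h => h.1.le⟩ (hg.smul_set) (smul_set_subset_iff.2 hmap)

lemma mul_mem_luxAdmissible (hA : MonotoneOn A (Ici 0)) (hS : MeasurableSet S) {C μ : ℝ}
    (hC : 0 < C) (hfg : ∀ t ∈ S, |f t| ≤ C * |g t|) (hμ : μ ∈ luxAdmissible A S g) :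
    C * μ ∈ luxAdmissible A S f := by
  have hCμ : 0 < C * μ := mul_pos hC hμ.1
  refine ⟨hCμ, le_trans (setLIntegral_mono' hS fun t ht => ?_) hμ.2⟩
  refine ENNReal.ofReal_le_ofReal
    (hA (div_nonneg (abs_nonneg _) hCμ.le) (div_nonneg (abs_nonneg _) hμ.1.le) ?_)
  rw [div_le_div_iff₀ hCμ hμ.1]
  nlinarith [hfg t ht, hμ.1]

lemma ofReal_apply_div_two_mul_le (hA2 : ∀ x, 0 ≤ x → 2 * A (x / 2) ≤ A x) {μ : ℝ} (hμ : 0 < μ)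
    (y : ℝ) : ENNReal.ofReal (A (|y| / (2 * μ))) ≤ 2⁻¹ * ENNReal.ofReal (A (|y| / μ)) := by
  have hx : 0 ≤ |y| / μ := div_nonneg (abs_nonneg _) hμ.le
  calc ENNReal.ofReal (A (|y| / (2 * μ))) = ENNReal.ofReal (A (|y| / μ / 2)) := by
        rw [div_div, mul_comm]
    _ ≤ ENNReal.ofReal (2⁻¹ * A (|y| / μ)) := ENNReal.ofReal_le_ofReal (by linarith [hA2 _ hx])
    _ = 2⁻¹ * ENNReal.ofReal (A (|y| / μ)) := by
        rw [ENNReal.ofReal_mul (by norm_num), ENNReal.ofReal_inv_of_pos two_pos,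
          ENNReal.ofReal_ofNat]

/-- On `(0, c]` the function `f` is dominated by `g` translated back from `(c, 2c]`, and on
`(c, b)` by `g` itself; so each of the two parts of the modular of `f` at `2μ` is at most half the
modular of `g` at `μ`, by `2 * A (x / 2) ≤ A x`. -/
lemma two_mul_mem_luxAdmissible_of_le_shift (hA : MonotoneOn A (Ici 0))
    (hA2 : ∀ x, 0 ≤ x → 2 * A (x / 2) ≤ A x) {b c μ : ℝ} (hc : 0 < c) (hcb : 2 * c < b)
    (hleft : ∀ t ∈ Ioc 0 c, |f t| ≤ |g (t + c)|) (hright : ∀ t ∈ Ioo c b, |f t| ≤ |g t|)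
    (hμ : μ ∈ luxAdmissible A (Ioo 0 b) g) : 2 * μ ∈ luxAdmissible A (Ioo 0 b) f := by
  have h2μ : 0 < 2 * μ := by linarith [hμ.1]
  set Φ : ℝ → ℝ≥0∞ := fun s => ENNReal.ofReal (A (|g s| / (2 * μ)))
  have hdom : ∀ {x y}, 0 ≤ x → x ≤ y →
      ENNReal.ofReal (A (x / (2 * μ))) ≤ ENNReal.ofReal (A (y / (2 * μ))) := fun hx hxy =>
    ENNReal.ofReal_le_ofReal (hA (div_nonneg hx h2μ.le) (div_nonneg (hx.trans hxy) h2μ.le)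
      (div_le_div_of_nonneg_right hxy h2μ.le))
  have hhalf : ∫⁻ s in Ioo c b, Φ s ≤ 2⁻¹ :=
    calc ∫⁻ s in Ioo c b, Φ s
        ≤ ∫⁻ s in Ioo 0 b, 2⁻¹ * ENNReal.ofReal (A (|g s| / μ)) :=
          (lintegral_mono_set (Ioo_subset_Ioo_left hc.le)).trans
            (setLIntegral_mono' measurableSet_Ioo fun s _ => ofReal_apply_div_two_mul_le hA2 hμ.1 _)
      _ ≤ 2⁻¹ * 1 := by
          rw [lintegral_const_mul' _ _ (by simp)]
          gcongr
          exact hμ.2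
      _ = 2⁻¹ := mul_one _
  have hleftInt : ∫⁻ t in Ioc 0 c, ENNReal.ofReal (A (|f t| / (2 * μ))) ≤ 2⁻¹ :=
    calc ∫⁻ t in Ioc 0 c, ENNReal.ofReal (A (|f t| / (2 * μ)))
        ≤ ∫⁻ t in Ioc 0 c, Φ (t + c) :=
          setLIntegral_mono' measurableSet_Ioc fun t ht => hdom (abs_nonneg _) (hleft t ht)
      _ = ∫⁻ s in Ioc c (c + c), Φ s := by
          rw [(measurePreserving_add_right volume c).setLIntegral_comp_emb
            (measurableEmbedding_addRight c), image_add_const_Ioc, zero_add]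
      _ ≤ ∫⁻ s in Ioo c b, Φ s := lintegral_mono_set fun s hs => ⟨hs.1, by linarith [hs.2]⟩
      _ ≤ 2⁻¹ := hhalf
  have hrightInt : ∫⁻ t in Ioo c b, ENNReal.ofReal (A (|f t| / (2 * μ))) ≤ 2⁻¹ :=
    (setLIntegral_mono' measurableSet_Ioo fun t ht =>
      hdom (abs_nonneg _) (hright t ht)).trans hhalf
  refine ⟨h2μ, ?_⟩
  calc ∫⁻ t in Ioo 0 b, ENNReal.ofReal (A (|f t| / (2 * μ)))
      ≤ (∫⁻ t in Ioc 0 c, ENNReal.ofReal (A (|f t| / (2 * μ))))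
        + ∫⁻ t in Ioo c b, ENNReal.ofReal (A (|f t| / (2 * μ))) := by
        rw [← Ioc_union_Ioo_eq_Ioo hc.le (by linarith)]
        exact lintegral_union_le _ _ _
    _ ≤ 2⁻¹ + 2⁻¹ := add_le_add hleftInt hrightInt
    _ = 1 := ENNReal.inv_two_add_inv_two

end Luxemburg

lemma setIntegral_Ioo_indicator_one {u a : ℝ} (hu : 0 ≤ u) (ha : 0 ≤ a) :
    ∫ s in Ioo 0 u, (Ioo (0:ℝ) a).indicator 1 s = min u a := by
  rw [setIntegral_indicator measurableSet_Ioo, Ioo_inter_Ioo, max_self]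
  simp [Real.volume_real_Ioo_of_le (le_min hu ha)]

lemma two_mul_rpow_lt_one {a β : ℝ} (hβ : 0 < β) (ha : 0 ≤ a) (ha2 : a < 2 ^ (-(1 / β))) :
    2 * a ^ β < 1 := by
  have : a ^ β < 2⁻¹ := by
    calc a ^ β < (2 ^ (-(1 / β))) ^ β := rpow_lt_rpow ha ha2 hβ
      _ = 2⁻¹ := by
        rw [← rpow_mul zero_le_two, neg_mul, one_div_mul_cancel hβ.ne', rpow_neg_one]
  linarith

/-- `t ^ (α - 1) * ∫₀^{t^(1/β)} χ_(0,a)`, see `setIntegral_Ioo_indicator_one`. -/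
def truncRpow (α β a t : ℝ) : ℝ := t ^ (α - 1) * min (t ^ (1 / β)) a

def tailRpow (α c : ℝ) : ℝ → ℝ := (Ioo c 1).indicator fun t => t ^ (α - 1)

section PowerProfiles

variable {α β a c t : ℝ}

lemma tailRpow_nonneg (hc : 0 ≤ c) (t : ℝ) : 0 ≤ tailRpow α c t :=
  indicator_nonneg (fun _ hs => rpow_nonneg (hc.trans hs.1.le) _) t

lemma truncRpow_nonneg (ht : 0 ≤ t) (ha : 0 ≤ a) : 0 ≤ truncRpow α β a t :=
  mul_nonneg (rpow_nonneg ht _) (le_min (rpow_nonneg ht _) ha)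

lemma truncRpow_of_le (hβ : 0 < β) (ht : 0 < t) (ha : 0 ≤ a) (hta : t ≤ a ^ β) :
    truncRpow α β a t = t ^ (α - 1 + 1 / β) := by
  rw [truncRpow, rpow_add ht, min_eq_left]
  rwa [one_div, rpow_inv_le_iff_of_pos ht.le ha hβ]

lemma truncRpow_of_ge (hβ : 0 < β) (ha : 0 ≤ a) (hta : a ^ β ≤ t) :
    truncRpow α β a t = a * t ^ (α - 1) := by
  rw [truncRpow, min_eq_right, mul_comm]
  rwa [one_div, le_rpow_inv_iff_of_pos ha ((rpow_nonneg ha β).trans hta) hβ]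

lemma mul_tailRpow_le_truncRpow (hβ : 0 < β) (ht : 0 ≤ t) (ha : 0 ≤ a) :
    a * tailRpow α (a ^ β) t ≤ truncRpow α β a t := by
  by_cases hmem : t ∈ Ioo (a ^ β) 1
  · rw [tailRpow, indicator_of_mem hmem, truncRpow_of_ge hβ ha hmem.1.le]
  · rw [tailRpow, indicator_of_notMem hmem, mul_zero]
    exact truncRpow_nonneg ht ha

/-- Below `a ^ β` the profile `t ^ (α - 1 + 1 / β)` is nondecreasing, while `t ^ (α - 1)` loses
at most the factor `2 ^ (α - 1)` from `a ^ β` to `2 a ^ β`. -/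
lemma truncRpow_le_shift (hα1 : α ≤ 1) (hβ : 0 < β) (hαβ : 1 ≤ α + 1 / β) (ha : 0 < a)
    (ht : t ∈ Ioc 0 (a ^ β)) :
    truncRpow α β a t ≤ 2 ^ (1 - α) * a * (t + a ^ β) ^ (α - 1) := by
  obtain ⟨ht0, htc⟩ := ht
  have hc : 0 < a ^ β := rpow_pos_of_pos ha β
  have hcpow : (a ^ β) ^ (α - 1 + 1 / β) = a * (a ^ β) ^ (α - 1) := by
    rw [rpow_add hc, ← rpow_mul ha.le β (1 / β), mul_one_div_cancel hβ.ne', rpow_one, mul_comm]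
  have htwo : (2:ℝ) ^ (1 - α) * (2 * a ^ β) ^ (α - 1) = (a ^ β) ^ (α - 1) := by
    rw [mul_rpow zero_le_two hc.le, ← mul_assoc, ← rpow_add two_pos]
    simp
  have hdecr : (2 * a ^ β) ^ (α - 1) ≤ (t + a ^ β) ^ (α - 1) :=
    rpow_le_rpow_of_nonpos (by positivity) (by linarith) (by linarith)
  calc truncRpow α β a t
      = t ^ (α - 1 + 1 / β) := truncRpow_of_le hβ ht0 ha.le htc
    _ ≤ (a ^ β) ^ (α - 1 + 1 / β) := rpow_le_rpow ht0.le htc (by linarith)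
    _ = a * (2 ^ (1 - α) * (2 * a ^ β) ^ (α - 1)) := by rw [hcpow, htwo]
    _ ≤ a * (2 ^ (1 - α) * (t + a ^ β) ^ (α - 1)) := by gcongr
    _ = 2 ^ (1 - α) * a * (t + a ^ β) ^ (α - 1) := by ring

end PowerProfiles

section Admissibility

variable {W w : ℝ → ℝ} {α β a μ : ℝ}

lemma inv_mul_mem_luxAdmissible_tailRpow (hW : IsYoungWith W w) (hβ : 0 < β) (ha : 0 < a)
    (hμ : μ ∈ luxAdmissible W (Ioo 0 1) (truncRpow α β a)) :
    a⁻¹ * μ ∈ luxAdmissible W (Ioo 0 1) (tailRpow α (a ^ β)) := by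
  refine mul_mem_luxAdmissible hW.monotoneOn measurableSet_Ioo (inv_pos.2 ha) (fun t ht => ?_) hμ
  rw [abs_of_nonneg (tailRpow_nonneg (rpow_nonneg ha.le β) t),
    abs_of_nonneg (truncRpow_nonneg ht.1.le ha.le), inv_mul_eq_div, le_div_iff₀ ha, mul_comm]
  exact mul_tailRpow_le_truncRpow hβ ht.1.le ha.le

lemma mul_mem_luxAdmissible_truncRpow (hW : IsYoungWith W w) (hα1 : α ≤ 1) (hβ : 0 < β)
    (hαβ : 1 ≤ α + 1 / β) (ha : 0 < a) (ha2 : 2 * a ^ β < 1)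
    (hμ : μ ∈ luxAdmissible W (Ioo 0 1) (tailRpow α (a ^ β))) :
    2 * 2 ^ (1 - α) * a * μ ∈ luxAdmissible W (Ioo 0 1) (truncRpow α β a) := by
  have hc : 0 < a ^ β := rpow_pos_of_pos ha β
  have hscaled : 2 ^ (1 - α) * a * μ ∈
      luxAdmissible W (Ioo 0 1) fun t => 2 ^ (1 - α) * a * tailRpow α (a ^ β) t :=
    mul_mem_luxAdmissible hW.monotoneOn measurableSet_Ioo (by positivity)
      (fun t _ => by rw [abs_mul, abs_of_pos (by positivity)]) hμ
  rw [show 2 * 2 ^ (1 - α) * a * μ = 2 * (2 ^ (1 - α) * a * μ) by ring]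
  refine two_mul_mem_luxAdmissible_of_le_shift hW.monotoneOn
    (fun x hx => hW.two_mul_apply_half_le hx) hc ha2 (fun t ht => ?_) (fun t ht => ?_) hscaled
  · have hmem : t + a ^ β ∈ Ioo (a ^ β) 1 := ⟨by linarith [ht.1], by linarith [ht.2]⟩
    rw [abs_of_nonneg (truncRpow_nonneg ht.1.le ha.le),
      abs_of_nonneg (mul_nonneg (by positivity) (tailRpow_nonneg hc.le _)), tailRpow,
      indicator_of_mem hmem]
    exact truncRpow_le_shift hα1 hβ hαβ ha ht
  · have ht0 : 0 ≤ t := hc.le.trans ht.1.le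
    have hK : (1:ℝ) ≤ 2 ^ (1 - α) := one_le_rpow one_le_two (by linarith)
    rw [abs_of_nonneg (truncRpow_nonneg ht0 ha.le),
      abs_of_nonneg (mul_nonneg (by positivity) (tailRpow_nonneg hc.le _)), tailRpow,
      indicator_of_mem ht, truncRpow_of_ge hβ ha.le ht.1.le]
    nlinarith [mul_nonneg ha.le (rpow_nonneg ht0 (α - 1))]

end Admissibility

theorem statement10_general (α β : ℝ) (hα1 : α < 1) (hβ : 0 < β)
    (hαβ : 1 ≤ α + 1 / β) (W : ℝ → ℝ) (hW : IsYoung W) :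
    ∃ c₁ c₂ : ℝ, 0 < c₁ ∧ 0 < c₂ ∧
      ∀ a ∈ Set.Ioo (0:ℝ) ((2:ℝ) ^ (-(1/β))),
        c₁ * (a * luxNorm W (Set.Ioo 0 1)
            ((Set.Ioo (a ^ β) 1).indicator fun t => t ^ (α - 1)))
          ≤ luxNorm W (Set.Ioo 0 1)
            (fun t => t ^ (α - 1) *
              ∫ s in Set.Ioo (0:ℝ) (t ^ (1/β)), (Set.Ioo (0:ℝ) a).indicator 1 s) ∧
        luxNorm W (Set.Ioo 0 1)
            (fun t => t ^ (α - 1) *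
              ∫ s in Set.Ioo (0:ℝ) (t ^ (1/β)), (Set.Ioo (0:ℝ) a).indicator 1 s)
          ≤ c₂ * (a * luxNorm W (Set.Ioo 0 1)
            ((Set.Ioo (a ^ β) 1).indicator fun t => t ^ (α - 1))) := by
  obtain ⟨w, hW⟩ := hW
  refine ⟨1, 2 * 2 ^ (1 - α), one_pos, by positivity, fun a ⟨ha, ha2⟩ => ?_⟩
  have hlower (μ) := inv_mul_mem_luxAdmissible_tailRpow (μ := μ) (α := α) hW hβ ha
  have hupper (μ) := mul_mem_luxAdmissible_truncRpow (μ := μ) hW hα1.le hβ hαβ ha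
    (two_mul_rpow_lt_one hβ ha.le ha2)
  have hmiddle : luxNorm W (Ioo 0 1) (fun t => t ^ (α - 1) *
      ∫ s in Ioo (0:ℝ) (t ^ (1 / β)), (Ioo (0:ℝ) a).indicator 1 s)
        = luxNorm W (Ioo 0 1) (truncRpow α β a) :=
    luxNorm_congr measurableSet_Ioo fun t ht => by
      rw [setIntegral_Ioo_indicator_one (rpow_nonneg ht.1.le _) ha.le, truncRpow]
  rw [hmiddle, one_mul]
  constructor
  · have := luxNorm_le_mul (inv_nonneg.2 ha.le) hlower fun ⟨μ, hμ⟩ => ⟨_, hupper μ hμ⟩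
    rwa [inv_mul_eq_div, le_div_iff₀ ha, mul_comm] at this
  · have := luxNorm_le_mul (by positivity) hupper fun ⟨μ, hμ⟩ => ⟨_, hlower μ hμ⟩
    rwa [mul_assoc] at this

theorem statement10 (α β : ℝ) (hα : 0 < α) (hα1 : α < 1) (hβ : 0 < β)
    (hαβ : 1 ≤ α + 1 / β) (W : ℝ → ℝ) (hW : IsYoung W) :
    ∃ c₁ c₂ : ℝ, 0 < c₁ ∧ 0 < c₂ ∧
      ∀ a ∈ Set.Ioo (0:ℝ) ((2:ℝ) ^ (-(1/β))),
        c₁ * (a * luxNorm W (Set.Ioo 0 1)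
            ((Set.Ioo (a ^ β) 1).indicator fun t => t ^ (α - 1)))
          ≤ luxNorm W (Set.Ioo 0 1)
            (fun t => t ^ (α - 1) *
              ∫ s in Set.Ioo (0:ℝ) (t ^ (1/β)), (Set.Ioo (0:ℝ) a).indicator 1 s) ∧
        luxNorm W (Set.Ioo 0 1)
            (fun t => t ^ (α - 1) *
              ∫ s in Set.Ioo (0:ℝ) (t ^ (1/β)), (Set.Ioo (0:ℝ) a).indicator 1 s)
          ≤ c₂ * (a * luxNorm W (Set.Ioo 0 1)
            ((Set.Ioo (a ^ β) 1).indicator fun t => t ^ (α - 1))) :=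
  statement10_general α β hα1 hβ hαβ W hW
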